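/- Let (K, K^∨) be a pair of dual reflexive Gorenstein cones of index k with deg^∨ = t_1 + ⋯ + t_k where each t_i ∈ K^∨_(1), and set Δ^∨ = {y ∈ K^∨ : ⟨deg, y⟩ = 1}. Let w_1, …, w_s be lattice points of Δ^∨ and suppose there exists v ∈ ℝ^d with ⟨v, t_i⟩ = 0 for all i, ⟨v, y⟩ ≥ −1 for all y ∈ Δ^∨, and ⟨v, w_j⟩ = −1 for all j. Then every w ∈ K^∨ that can be written as w = ∑_{i=1}^k a_i t_i + ∑_{j=1}^s b_j w_j with a_i ∈ ℝ and b_j ≥ 0 satisfies a_i ≥ 0 for all i; equivalently, the intersection of K^∨ with the set (ℝ t_1 + ⋯ + ℝ t_k) + cone(w_1, …, w_s) equals the cone of all nonnegative combinations of t_1, …, t_k, w_1, …, w_s. -/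

import Mathlib

/-!
The functional `l = v + deg` is nonnegative on the generators of `K^∨`, which lie in `Δ^∨`, so by
Farkas' lemma it lies in `K`; it pairs to `1` with every `t_i` and to `0` with every `w_j`. Writing
`l` as a nonnegative combination of the generators of `K`, for each `i` some generator `m` with
positive coefficient has `⟨m, t_i⟩ > 0` and `⟨m, w_j⟩ = 0` for all `j`. Since
`1 = ⟨m, deg^∨⟩ = ∑ ⟨m, t_i'⟩` is a sum of nonnegative integers, `⟨m, t_i'⟩ = 0` for `i' ≠ i`.
Pairing `m` with `∑ a_i' t_i' + ∑ b_j w_j ∈ K^∨` then gives `a_i ≥ 0`.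
-/

open scoped BigOperators Pointwise

noncomputable section

/-- The standard pairing `⟨x, y⟩ = ∑ i, x i * y i` on `ℝ^d`. -/
def pairR {d : ℕ} (x y : Fin d → ℝ) : ℝ := ∑ i, x i * y i

/-- A point of `ℝ^d` is a lattice point if all of its coordinates are integers. -/
def IsLatticePoint {d : ℕ} (x : Fin d → ℝ) : Prop := ∀ i, ∃ z : ℤ, x i = (z : ℝ)

/-- The dual cone `K^∨ = {y : ⟨x, y⟩ ≥ 0 for all x ∈ K}`. -/
def dualCone {d : ℕ} (K : Set (Fin d → ℝ)) : Set (Fin d → ℝ) :=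
  { y | ∀ x ∈ K, 0 ≤ pairR x y }

/-- A Gorenstein cone with degree element `n` (a lattice point): the set of all
nonnegative real linear combinations of a finite set of lattice points, each pairing
to `1` with `n`, such that `K ∩ (−K) = {0}` and `span K = ℝ^d`. -/
def IsGorensteinCone {d : ℕ} (K : Set (Fin d → ℝ)) (n : Fin d → ℝ) : Prop :=
  IsLatticePoint n ∧
  (∃ S : Finset (Fin d → ℝ),
      (∀ v ∈ S, IsLatticePoint v ∧ pairR v n = 1) ∧
      K = { x | ∃ c : (Fin d → ℝ) → ℝ, (∀ v, 0 ≤ c v) ∧ x = ∑ v ∈ S, c v • v }) ∧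
  K ∩ (-K) = {0} ∧
  Submodule.span ℝ K = ⊤

/-- `K_(1)`: the lattice points `m ∈ K` with `⟨m, deg^∨⟩ = 1`. -/
def Kone {d : ℕ} (K : Set (Fin d → ℝ)) (degVee : Fin d → ℝ) : Set (Fin d → ℝ) :=
  { m | IsLatticePoint m ∧ m ∈ K ∧ pairR m degVee = 1 }

/-- `K^∨_(1)`: the lattice points `n ∈ K^∨` with `⟨deg, n⟩ = 1`. -/
def KvOne {d : ℕ} (K : Set (Fin d → ℝ)) (deg : Fin d → ℝ) : Set (Fin d → ℝ) :=
  { n | IsLatticePoint n ∧ n ∈ dualCone K ∧ pairR deg n = 1 }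

open scoped Matrix NNReal

open PointedCone

section FinitelyGeneratedCone

variable {E : Type*} [AddCommGroup E] [Module ℝ E] {S : Finset E}

theorem PointedCone.mem_hull_finset_iff {x : E} :
    x ∈ hull ℝ (S : Set E) ↔ ∃ c : E → ℝ, (∀ v, 0 ≤ c v) ∧ x = ∑ v ∈ S, c v • v := by
  constructor
  · intro hx
    obtain ⟨c, -, rfl⟩ := Submodule.mem_span_finset.1 hx
    exact ⟨fun v => c v, fun v => (c v).2, rfl⟩
  · rintro ⟨c, hc, rfl⟩
    exact Submodule.sum_mem _ fun v hv =>
      Submodule.smul_mem _ (⟨c v, hc v⟩ : ℝ≥0) (subset_hull hv)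

theorem PointedCone.hull_finset_eq_insert_zero (f : E →ₗ[ℝ] ℝ) (hS : ∀ v ∈ S, f v = 1) :
    (hull ℝ (S : Set E) : Set E) =
      insert 0 {x | 0 ≤ f x ∧ ∃ p ∈ convexHull ℝ (S : Set E), x = f x • p} := by
  ext x
  constructor
  · intro hx
    obtain ⟨c, hc, rfl⟩ := mem_hull_finset_iff.1 hx
    have hfx : f (∑ v ∈ S, c v • v) = ∑ v ∈ S, c v := by
      simp only [map_sum, map_smul, smul_eq_mul]
      exact Finset.sum_congr rfl fun v hv => by rw [hS v hv, mul_one]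
    rcases (Finset.sum_nonneg fun v _ => hc v : 0 ≤ ∑ v ∈ S, c v).eq_or_lt with hzero | hpos
    · refine Or.inl (Finset.sum_eq_zero fun v hv => ?_)
      rw [(Finset.sum_eq_zero_iff_of_nonneg fun v _ => hc v).1 hzero.symm v hv, zero_smul]
    · refine Or.inr ⟨hfx ▸ hpos.le, S.centerMass c id,
        S.centerMass_mem_convexHull (fun v _ => hc v) hpos fun v hv => hv, ?_⟩
      rw [hfx, Finset.centerMass, smul_smul, mul_inv_cancel₀ hpos.ne', one_smul]
      rfl
  · rintro (rfl | ⟨hfx, p, hp, hx⟩)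
    · exact zero_mem _
    · rw [hx]
      exact Submodule.smul_mem _ (⟨f x, hfx⟩ : ℝ≥0)
        (convexHull_min subset_hull (hull ℝ _).convex hp)

variable [TopologicalSpace E] [IsTopologicalAddGroup E] [ContinuousSMul ℝ E] [T2Space E]

theorem PointedCone.isClosed_hull_finset (f : E →L[ℝ] ℝ) (hS : ∀ v ∈ S, f v = 1) :
    IsClosed (hull ℝ (S : Set E) : Set E) := by
  rw [hull_finset_eq_insert_zero (f : E →ₗ[ℝ] ℝ) hS, Set.insert_eq, ContinuousLinearMap.coe_coe]
  refine isClosed_singleton.union ?_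
  have : CompactSpace (convexHull ℝ (S : Set E)) :=
    isCompact_iff_compactSpace.1 (S.finite_toSet.isCompact_convexHull ℝ)
  have hfst : {x | 0 ≤ f x ∧ ∃ p ∈ convexHull ℝ (S : Set E), x = f x • p} =
      Prod.fst '' {q : E × convexHull ℝ (S : Set E) | 0 ≤ f q.1 ∧ q.1 = f q.1 • (q.2 : E)} := by
    ext x
    simp
  rw [hfst, Set.ofPred_and]
  refine isClosedMap_fst_of_compactSpace _
    ((isClosed_le continuous_const ?_).inter (isClosed_eq ?_ ?_)) <;> fun_prop

end FinitelyGeneratedCone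

section DotProduct

variable {ι : Type*} [Fintype ι]

theorem PointedCone.dotProduct_nonneg_of_mem_hull {S : Set (ι → ℝ)} {x y : ι → ℝ}
    (hx : x ∈ hull ℝ S) (hy : ∀ m ∈ S, 0 ≤ m ⬝ᵥ y) : 0 ≤ x ⬝ᵥ y := by
  induction hx using Submodule.span_induction with
  | mem m hm => exact hy m hm
  | zero => simp
  | add _ _ _ _ h₁ h₂ => rw [add_dotProduct]; exact add_nonneg h₁ h₂
  | smul r _ _ h => rw [smul_dotProduct]; exact smul_nonneg r.2 h

theorem PointedCone.mem_hull_of_forall_dotProduct_nonneg {S : Finset (ι → ℝ)} {n x : ι → ℝ}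
    (hS : ∀ m ∈ S, m ⬝ᵥ n = 1) (hx : ∀ y, (∀ m ∈ S, 0 ≤ m ⬝ᵥ y) → 0 ≤ x ⬝ᵥ y) :
    x ∈ hull ℝ (S : Set (ι → ℝ)) := by
  classical
  let C : ProperCone ℝ (ι → ℝ) :=
    ⟨hull ℝ (S : Set (ι → ℝ)),
      isClosed_hull_finset (LinearMap.toContinuousLinearMap (dotProductEquiv ℝ ι n))
        fun m hm => by simpa [dotProduct_comm] using hS m hm⟩
  by_contra hxC
  obtain ⟨f, hfC, hfx⟩ := C.hyperplane_separation_point (x₀ := x) hxC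
  have hf : ∀ z, f z = z ⬝ᵥ (dotProductEquiv ℝ ι).symm f := fun z => by
    rw [dotProduct_comm, ← dotProductEquiv_apply_apply, LinearEquiv.apply_symm_apply]
    rfl
  refine hfx.not_ge ?_
  rw [hf]
  exact hx _ fun m hm => (hf m) ▸ hfC m (subset_hull hm)

theorem PointedCone.exists_mem_dotProduct_pos_of_mem_hull {S : Finset (ι → ℝ)} {x a y : ι → ℝ}
    (hx : x ∈ hull ℝ (S : Set (ι → ℝ))) (ha : 0 < x ⬝ᵥ a) (hy : ∀ m ∈ S, 0 ≤ m ⬝ᵥ y)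
    (hxy : x ⬝ᵥ y = 0) : ∃ m ∈ S, 0 < m ⬝ᵥ a ∧ m ⬝ᵥ y = 0 := by
  obtain ⟨c, hc, rfl⟩ := mem_hull_finset_iff.1 hx
  simp only [sum_dotProduct, smul_dotProduct, smul_eq_mul] at ha hxy
  obtain ⟨m, hm, hpos⟩ := Finset.exists_lt_of_sum_lt (f := fun _ => (0 : ℝ)) (by simpa using ha)
  have hcm : c m ≠ 0 := left_ne_zero_of_mul hpos.ne'
  have hmy := (Finset.sum_eq_zero_iff_of_nonneg fun v hv => mul_nonneg (hc v) (hy v hv)).1 hxy m hm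
  exact ⟨m, hm, pos_of_mul_pos_right hpos (hc m), (mul_eq_zero.1 hmy).resolve_left hcm⟩

end DotProduct

section Gorenstein

variable {d : ℕ}

theorem pairR_eq_dotProduct (x y : Fin d → ℝ) : pairR x y = x ⬝ᵥ y := rfl

theorem IsLatticePoint.exists_dotProduct_eq_intCast {x y : Fin d → ℝ}
    (hx : IsLatticePoint x) (hy : IsLatticePoint y) : ∃ z : ℤ, x ⬝ᵥ y = z := by
  choose f hf using hx
  choose g hg using hy
  exact ⟨∑ i, f i * g i, by simp [dotProduct, hf, hg]⟩

theorem IsGorensteinCone.exists_eq_hull {K : Set (Fin d → ℝ)} {n : Fin d → ℝ}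
    (h : IsGorensteinCone K n) : ∃ S : Finset (Fin d → ℝ),
      (∀ m ∈ S, IsLatticePoint m ∧ m ⬝ᵥ n = 1) ∧ K = hull ℝ (S : Set (Fin d → ℝ)) := by
  obtain ⟨-, ⟨S, hS, rfl⟩, -⟩ := h
  exact ⟨S, hS, Set.ext fun x => mem_hull_finset_iff.symm⟩

theorem mem_dualCone_hull_iff {S : Set (Fin d → ℝ)} {y : Fin d → ℝ} :
    y ∈ dualCone (hull ℝ S : Set (Fin d → ℝ)) ↔ ∀ m ∈ S, 0 ≤ m ⬝ᵥ y :=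
  ⟨fun hy m hm => hy m (subset_hull hm), fun hy _ hx => dotProduct_nonneg_of_mem_hull hx hy⟩

theorem eq_zero_of_sum_eq_one_of_isInt {ι : Type*} {s : Finset ι} {f : ι → ℝ}
    (hint : ∀ i ∈ s, ∃ z : ℤ, f i = z) (hnonneg : ∀ i ∈ s, 0 ≤ f i) (hsum : ∑ i ∈ s, f i = 1)
    {i j : ι} (hi : i ∈ s) (hj : j ∈ s) (hji : j ≠ i) (hpos : 0 < f i) : f j = 0 := by
  obtain ⟨z, hz⟩ := hint i hi
  have hz_pos : 0 < z := by exact_mod_cast hz ▸ hpos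
  have hone : 1 ≤ f i := hz ▸ by exact_mod_cast hz_pos
  have := Finset.add_le_sum hnonneg hi hj hji.symm
  linarith [hnonneg j hj]

theorem IsGorensteinCone.add_mem_of_forall_ge_neg_one {K : Set (Fin d → ℝ)}
    {deg degVee v : Fin d → ℝ} (hK : IsGorensteinCone K degVee)
    (hKv : IsGorensteinCone (dualCone K) deg)
    (hv : ∀ y ∈ dualCone K, deg ⬝ᵥ y = 1 → -1 ≤ v ⬝ᵥ y) : v + deg ∈ K := by
  obtain ⟨S, hS, rfl⟩ := hK.exists_eq_hull
  obtain ⟨S', hS', hS'_eq⟩ := hKv.exists_eq_hull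
  refine mem_hull_of_forall_dotProduct_nonneg (fun m hm => (hS m hm).2) fun y hy => ?_
  have hy' : y ∈ (hull ℝ (S' : Set (Fin d → ℝ)) : Set (Fin d → ℝ)) :=
    hS'_eq ▸ mem_dualCone_hull_iff.2 hy
  rw [dotProduct_comm]
  refine dotProduct_nonneg_of_mem_hull hy' fun u hu => ?_
  have hu_deg : deg ⬝ᵥ u = 1 := by rw [dotProduct_comm]; exact (hS' u hu).2
  have := hv u (hS'_eq ▸ subset_hull hu) hu_deg
  rw [dotProduct_add, dotProduct_comm, dotProduct_comm u, hu_deg]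
  linarith

theorem exists_generator_dotProduct_pos_and_eq_zero {k s : ℕ} {S : Finset (Fin d → ℝ)}
    {degVee l : Fin d → ℝ}
    (hS : ∀ m ∈ S, IsLatticePoint m ∧ m ⬝ᵥ degVee = 1) {t : Fin k → Fin d → ℝ}
    (ht : ∀ i, IsLatticePoint (t i) ∧ ∀ m ∈ S, 0 ≤ m ⬝ᵥ t i) (hdec : degVee = ∑ i, t i)
    {w : Fin s → Fin d → ℝ} (hw : ∀ j, ∀ m ∈ S, 0 ≤ m ⬝ᵥ w j)
    (hl : l ∈ hull ℝ (S : Set (Fin d → ℝ))) (hlw : ∀ j, l ⬝ᵥ w j = 0) {i : Fin k}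
    (hlt : 0 < l ⬝ᵥ t i) :
    ∃ m ∈ S, 0 < m ⬝ᵥ t i ∧ (∀ i' ≠ i, m ⬝ᵥ t i' = 0) ∧ ∀ j, m ⬝ᵥ w j = 0 := by
  obtain ⟨m, hm, hmt, hmw⟩ := exists_mem_dotProduct_pos_of_mem_hull (y := ∑ j, w j) hl hlt
    (fun m hm => by rw [dotProduct_sum]; exact Finset.sum_nonneg fun j _ => hw j m hm)
    (by simp [dotProduct_sum, hlw])
  rw [dotProduct_sum, Finset.sum_eq_zero_iff_of_nonneg fun j _ => hw j m hm] at hmw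
  refine ⟨m, hm, hmt, fun i' hi' => ?_, fun j => hmw j (Finset.mem_univ j)⟩
  refine eq_zero_of_sum_eq_one_of_isInt (f := fun i => m ⬝ᵥ t i)
    (fun i _ => (hS m hm).1.exists_dotProduct_eq_intCast (ht i).1) (fun i _ => (ht i).2 m hm)
    ?_ (Finset.mem_univ i) (Finset.mem_univ i') hi' hmt
  rw [← dotProduct_sum, ← hdec, (hS m hm).2]

theorem add_mem_dualCone {K : Set (Fin d → ℝ)} {x y : Fin d → ℝ} (hx : x ∈ dualCone K)
    (hy : y ∈ dualCone K) : x + y ∈ dualCone K := fun z hz => by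
  rw [pairR_eq_dotProduct, dotProduct_add]
  exact add_nonneg (hx z hz) (hy z hz)

theorem sum_smul_mem_dualCone {K : Set (Fin d → ℝ)} {ι : Type*} (s : Finset ι)
    {c : ι → ℝ} {x : ι → Fin d → ℝ} (hc : ∀ i ∈ s, 0 ≤ c i) (hx : ∀ i ∈ s, x i ∈ dualCone K) :
    ∑ i ∈ s, c i • x i ∈ dualCone K := fun z hz => by
  rw [pairR_eq_dotProduct, dotProduct_sum]
  exact Finset.sum_nonneg fun i hi => by
    rw [dotProduct_smul, smul_eq_mul]
    exact mul_nonneg (hc i hi) (hx i hi z hz)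

theorem nonneg_of_dotProduct_add_sum_smul_nonneg {k s : ℕ} {t : Fin k → Fin d → ℝ}
    {w : Fin s → Fin d → ℝ} {a : Fin k → ℝ} {b : Fin s → ℝ} {m : Fin d → ℝ} {i : Fin k}
    (h : 0 ≤ m ⬝ᵥ ((∑ i, a i • t i) + ∑ j, b j • w j)) (hmt : 0 < m ⬝ᵥ t i)
    (hmt' : ∀ i' ≠ i, m ⬝ᵥ t i' = 0) (hmw : ∀ j, m ⬝ᵥ w j = 0) : 0 ≤ a i := by
  simp only [dotProduct_add, dotProduct_sum, dotProduct_smul, smul_eq_mul, hmw, mul_zero,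
    Finset.sum_const_zero, add_zero] at h
  rw [Finset.sum_eq_single_of_mem i (Finset.mem_univ i) fun i' _ hi' => by rw [hmt' i' hi',
    mul_zero]] at h
  exact nonneg_of_mul_nonneg_left h hmt

end Gorenstein

theorem stmt6_general {d k s : ℕ} (K : Set (Fin d → ℝ)) (deg degVee : Fin d → ℝ)
    (hK : IsGorensteinCone K degVee) (hKv : IsGorensteinCone (dualCone K) deg)
    (t : Fin k → (Fin d → ℝ)) (ht : ∀ i, t i ∈ KvOne K deg)
    (hdec : degVee = ∑ i, t i)
    (w : Fin s → (Fin d → ℝ))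
    (hw : ∀ j, IsLatticePoint (w j) ∧ w j ∈ dualCone K ∧ pairR deg (w j) = 1)
    (v : Fin d → ℝ) (hvt : ∀ i, pairR v (t i) = 0)
    (hvDelta : ∀ y, y ∈ dualCone K → pairR deg y = 1 → -1 ≤ pairR v y)
    (hvw : ∀ j, pairR v (w j) = -1) :
    (∀ w' ∈ dualCone K, ∀ (a : Fin k → ℝ) (b : Fin s → ℝ), (∀ j, 0 ≤ b j) →
        w' = (∑ i, a i • t i) + ∑ j, b j • w j → ∀ i, 0 ≤ a i) ∧
    dualCone K ∩ { x | ∃ (a : Fin k → ℝ) (b : Fin s → ℝ), (∀ j, 0 ≤ b j) ∧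
          x = (∑ i, a i • t i) + ∑ j, b j • w j }
      = { x | ∃ (a : Fin k → ℝ) (b : Fin s → ℝ), (∀ i, 0 ≤ a i) ∧ (∀ j, 0 ≤ b j) ∧
          x = (∑ i, a i • t i) + ∑ j, b j • w j } := by
  obtain ⟨S, hS, hKS⟩ := hK.exists_eq_hull
  have hdual {y : Fin d → ℝ} (hy : y ∈ dualCone K) : ∀ m ∈ S, 0 ≤ m ⬝ᵥ y :=
    mem_dualCone_hull_iff.1 (hKS ▸ hy)
  have hl : v + deg ∈ (hull ℝ (S : Set (Fin d → ℝ)) : Set (Fin d → ℝ)) :=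
    hKS ▸ hK.add_mem_of_forall_ge_neg_one hKv hvDelta
  have hlt (i : Fin k) : 0 < (v + deg) ⬝ᵥ t i := by
    rw [add_dotProduct, ← pairR_eq_dotProduct, ← pairR_eq_dotProduct, hvt i, (ht i).2.2]
    norm_num
  have hlw (j : Fin s) : (v + deg) ⬝ᵥ w j = 0 := by
    rw [add_dotProduct, ← pairR_eq_dotProduct, ← pairR_eq_dotProduct, hvw j, (hw j).2.2]
    norm_num
  have hcoeff : ∀ w' ∈ dualCone K, ∀ (a : Fin k → ℝ) (b : Fin s → ℝ), (∀ j, 0 ≤ b j) →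
      w' = (∑ i, a i • t i) + ∑ j, b j • w j → ∀ i, 0 ≤ a i := by
    rintro w' hw' a b - rfl i
    obtain ⟨m, hm, hmt, hmt', hmw⟩ := exists_generator_dotProduct_pos_and_eq_zero hS
      (fun i => ⟨(ht i).1, hdual (ht i).2.1⟩) hdec (fun j => hdual (hw j).2.1) hl hlw (hlt i)
    exact nonneg_of_dotProduct_add_sum_smul_nonneg (hdual hw' m hm) hmt hmt' hmw
  refine ⟨hcoeff, Set.ext fun x => ⟨?_, ?_⟩⟩
  · rintro ⟨hx, a, b, hb, rfl⟩
    exact ⟨a, b, hcoeff _ hx a b hb rfl, hb, rfl⟩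
  · rintro ⟨a, b, ha, hb, rfl⟩
    exact ⟨add_mem_dualCone (sum_smul_mem_dualCone _ (fun i _ => ha i) fun i _ => (ht i).2.1)
      (sum_smul_mem_dualCone _ (fun j _ => hb j) fun j _ => (hw j).2.1), a, b, hb, rfl⟩

/-- With `deg^∨ = t_1 + ⋯ + t_k`, `t_i ∈ K^∨_(1)`: let `w_1, …, w_s` be
lattice points of `Δ^∨` and suppose `v` satisfies `⟨v, t_i⟩ = 0`, `⟨v, y⟩ ≥ −1` on
`Δ^∨`, and `⟨v, w_j⟩ = −1`. Then every `w ∈ K^∨` written as `∑ a_i t_i + ∑ b_j w_j`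
with `b_j ≥ 0` has all `a_i ≥ 0`; equivalently,
`K^∨ ∩ (span(t) + cone(w)) = cone(t_1, …, t_k, w_1, …, w_s)`. -/
theorem stmt6 {d k s : ℕ} (K : Set (Fin d → ℝ)) (deg degVee : Fin d → ℝ)
    (hK : IsGorensteinCone K degVee) (hKv : IsGorensteinCone (dualCone K) deg)
    (hk : pairR deg degVee = (k : ℝ))
    (t : Fin k → (Fin d → ℝ)) (ht : ∀ i, t i ∈ KvOne K deg)
    (hdec : degVee = ∑ i, t i)
    (w : Fin s → (Fin d → ℝ))
    (hw : ∀ j, IsLatticePoint (w j) ∧ w j ∈ dualCone K ∧ pairR deg (w j) = 1)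
    (v : Fin d → ℝ) (hvt : ∀ i, pairR v (t i) = 0)
    (hvDelta : ∀ y, y ∈ dualCone K → pairR deg y = 1 → -1 ≤ pairR v y)
    (hvw : ∀ j, pairR v (w j) = -1) :
    (∀ w' ∈ dualCone K, ∀ (a : Fin k → ℝ) (b : Fin s → ℝ), (∀ j, 0 ≤ b j) →
        w' = (∑ i, a i • t i) + ∑ j, b j • w j → ∀ i, 0 ≤ a i) ∧
    dualCone K ∩ { x | ∃ (a : Fin k → ℝ) (b : Fin s → ℝ), (∀ j, 0 ≤ b j) ∧
          x = (∑ i, a i • t i) + ∑ j, b j • w j }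
      = { x | ∃ (a : Fin k → ℝ) (b : Fin s → ℝ), (∀ i, 0 ≤ a i) ∧ (∀ j, 0 ≤ b j) ∧
          x = (∑ i, a i • t i) + ∑ j, b j • w j } :=
  stmt6_general K deg degVee hK hKv t ht hdec w hw v hvt hvDelta hvw
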